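/- arXiv:1909.07728 — 2 statements merged into one kernel-verified Lean document; each statement's English description precedes it below -/
import Mathlib

section
/- Let K be a field, σ an automorphism of K with fixed field F, and f(t) = t^m − Σ a_i t^i ∈ K[t;σ] not right invariant. If a_{m−1} ≠ 0, then Nuc(S_f) = F. -/
open Polynomial

/-- Skew (twisted) multiplication on polynomials over `K`, representing the
multiplication of the twisted polynomial ring `K[t;σ]` with `t·a = σ(a)·t`:
`(a t^i)·(b t^j) = a σ^i(b) t^{i+j}`. -/
noncomputable def sMul {K : Type} [Field K] (σ : K ≃+* K) (p q : K[X]) : K[X] :=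
  p.sum fun i a => C a * (q.map ((σ ^ i : K ≃+* K) : K →+* K)) * X ^ i

/-- `f` is right invariant in `K[t;σ]`: `f·g ∈ R·f` for all `g`. -/
def RightInvariant {K : Type} [Field K] (σ : K ≃+* K) (f : K[X]) : Prop :=
  ∀ g : K[X], ∃ q : K[X], sMul σ f g = sMul σ q f

/-- Membership in the eigenring of `f`, i.e. the right nucleus of the Petit
algebra `S_f = K[t;σ]/K[t;σ]f` (for `f` not right invariant):
`{g | deg g < deg f ∧ f·g ∈ R·f}`. -/
def InEigenring {K : Type} [Field K] (σ : K ≃+* K) (f g : K[X]) : Prop :=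
  g.degree < f.degree ∧ ∃ q : K[X], sMul σ f g = sMul σ q f

/-- Remainder of right division by `f` in `K[t;σ]` (Petit multiplication in
`S_f` is `g ∘ h = (g·h) mod_r f`). -/
noncomputable def modRight {K : Type} [Field K] (σ : K ≃+* K) (f g : K[X]) : K[X] := by
  classical
  exact if h : ∃ r : K[X], r.degree < f.degree ∧ ∃ q : K[X], g = sMul σ q f + r
    then h.choose else 0

lemma map_one_rehom {K : Type} [Field K] (q : K[X]) :
    Polynomial.map (((1 : K ≃+* K)) : K →+* K) q = q := by
  have : (((1 : K ≃+* K)) : K →+* K) = RingHom.id K := by ext x; rfl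
  rw [this, map_id]

lemma coeff_sMul {K : Type} [Field K] (σ : K ≃+* K) (p q : K[X]) (n : ℕ) :
    (sMul σ p q).coeff n = ∑ i ∈ p.support,
      if i ≤ n then p.coeff i * (σ ^ i : K ≃+* K) (q.coeff (n - i)) else 0 := by
  unfold sMul
  rw [Polynomial.sum_def, finset_sum_coeff]
  refine Finset.sum_congr rfl fun i hi => ?_
  rw [mul_assoc, coeff_C_mul, coeff_mul_X_pow']
  split_ifs with h
  · rw [coeff_map]; rfl
  · simp

lemma sMul_C_left {K : Type} [Field K] (σ : K ≃+* K) (c : K) (q : K[X]) :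
    sMul σ (C c) q = C c * q := by
  unfold sMul
  rw [Polynomial.sum_C_index]
  · rw [pow_zero, map_one_rehom, pow_zero, mul_one]
  · simp

lemma coeff_sMul_C_right {K : Type} [Field K] (σ : K ≃+* K) (p : K[X]) (d : K) (n : ℕ) :
    (sMul σ p (C d)).coeff n = p.coeff n * (σ ^ n : K ≃+* K) d := by
  rw [coeff_sMul]
  rw [Finset.sum_congr rfl (fun i hi => ?_), Finset.sum_ite_eq' p.support n
    (fun i => p.coeff i * (σ ^ i : K ≃+* K) d)]
  · split_ifs with h
    · rfl
    · rw [notMem_support_iff.mp h, zero_mul]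
  · by_cases h : i = n
    · subst h; simp
    · rcases le_or_gt i n with h2 | h2
      · rw [if_pos h2, coeff_C, if_neg (fun hc => h (by omega)), map_zero, mul_zero, if_neg h]
      · rw [if_neg (by omega), if_neg h]

/-- Proposition 2.3 (ii): for `f(t) = t^m - Σ a_i t^i ∈ K[t;σ]` not right invariant
with `a_{m-1} ≠ 0`, the nucleus of `S_f` equals `F = Fix(σ)`. -/
theorem nucleus_eq_fix_of_coeff_ne_zero {K : Type} [Field K] (σ : K ≃+* K)
    (m : ℕ) (hm : 2 ≤ m) (a : ℕ → K) (f : K[X])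
    (hf : f = X ^ m - ∑ i ∈ Finset.range m, C (a i) * X ^ i)
    (hri : ¬ RightInvariant σ f) (ha : a (m - 1) ≠ 0) :
    {d : K | InEigenring σ f (C d)} = {d : K | σ d = d} := by
  have hS : ∀ k, (∑ i ∈ Finset.range m, C (a i) * X ^ i).coeff k
      = if k < m then a k else 0 := by
    intro k
    rw [finset_sum_coeff]
    simp only [coeff_C_mul, coeff_X_pow, mul_ite, mul_one, mul_zero]
    rw [Finset.sum_ite_eq (Finset.range m) k a]
    simp [Finset.mem_range]
  have hcoef : ∀ k, f.coeff k = (if k = m then 1 else 0) - (if k < m then a k else 0) := by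
    intro k
    rw [hf, coeff_sub, coeff_X_pow, hS]
  have hfm : f.coeff m = 1 := by rw [hcoef]; simp
  have hfm1 : f.coeff (m - 1) = -a (m - 1) := by
    rw [hcoef, if_neg (by omega), if_pos (by omega), zero_sub]
  have hftop : ∀ n, m < n → f.coeff n = 0 := by
    intro n hn
    rw [hcoef, if_neg (by omega), if_neg (by omega), sub_zero]
  have hnat : f.natDegree = m := by
    have h1 : f.natDegree ≤ m := natDegree_le_iff_coeff_eq_zero.mpr hftop
    have h2 : m ≤ f.natDegree := le_natDegree_of_ne_zero (by rw [hfm]; exact one_ne_zero)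
    omega
  have hf0 : f ≠ 0 := fun h => by simp [h] at hfm
  have hdegf : f.degree = (m : WithBot ℕ) := by
    rw [degree_eq_natDegree hf0, hnat]
  ext d
  simp only [Set.mem_setOf_eq]
  constructor
  · rintro ⟨hdeg, q, heq⟩
    by_cases hd : d = 0
    · subst hd; exact map_zero σ
    -- q ≠ 0
    have hq0 : q ≠ 0 := by
      intro h
      subst h
      have : (sMul σ f (C d)).coeff m = (σ ^ m : K ≃+* K) d := by
        rw [coeff_sMul_C_right, hfm, one_mul]
      rw [heq] at this
      have hz : sMul σ (0 : K[X]) f = 0 := by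
        unfold sMul; exact Polynomial.sum_zero_index _
      rw [hz, coeff_zero] at this
      exact hd ((σ ^ m : K ≃+* K).injective (by rw [← this, map_zero]))
    set n := q.natDegree with hn
    have hc : (sMul σ q f).coeff (n + m) = q.coeff n := by
      rw [coeff_sMul]
      rw [Finset.sum_eq_single n]
      · rw [if_pos (Nat.le_add_right n m), show n + m - n = m by omega, hfm, map_one, mul_one]
      · intro i hi hne
        have hle : i ≤ n := le_natDegree_of_mem_supp i hi
        rw [if_pos (by omega), hftop (n + m - i) (by omega), map_zero, mul_zero]
      · intro hns
        rw [if_pos (Nat.le_add_right n m), notMem_support_iff.mp hns, zero_mul]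
    have hcl : (sMul σ f (C d)).coeff (n + m) = f.coeff (n + m) * (σ ^ (n + m) : K ≃+* K) d :=
      coeff_sMul_C_right σ f d (n + m)
    have hn0 : n = 0 := by
      by_contra hne
      have : f.coeff (n + m) = 0 := hftop _ (by omega)
      rw [heq, hc] at hcl
      rw [this, zero_mul] at hcl
      exact hq0 (leadingCoeff_eq_zero.mp hcl)
    have hq' : q.natDegree = 0 := by rw [← hn]; exact hn0
    set c := q.coeff 0 with hcdef
    rw [show q = C c from eq_C_of_natDegree_eq_zero hq', sMul_C_left] at heq
    have e1 : (σ ^ m : K ≃+* K) d = c := by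
      have := congrArg (fun p => Polynomial.coeff p m) heq
      simp only [coeff_sMul_C_right, coeff_C_mul, hfm, one_mul, mul_one] at this
      exact this
    have e2 : (σ ^ (m - 1) : K ≃+* K) d = c := by
      have := congrArg (fun p => Polynomial.coeff p (m - 1)) heq
      simp only [coeff_sMul_C_right, coeff_C_mul, hfm1] at this
      have h' : -a (m-1) * (σ ^ (m - 1) : K ≃+* K) d = -a (m-1) * c := by
        rw [this]; ring
      exact mul_left_cancel₀ (neg_ne_zero.mpr ha) h'
    have key : (σ ^ (m - 1) : K ≃+* K) (σ d) = (σ ^ (m - 1) : K ≃+* K) d := by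
      have : (σ ^ ((m - 1) + 1) : K ≃+* K) d = c := by
        rw [show m - 1 + 1 = m by omega]; exact e1
      rw [pow_succ] at this
      rw [show ((σ ^ (m-1) * σ : K ≃+* K)) d = (σ ^ (m - 1) : K ≃+* K) (σ d) from rfl] at this
      rw [this, e2]
    exact (σ ^ (m - 1) : K ≃+* K).injective key
  · intro hd
    have hdn : ∀ n : ℕ, (σ ^ n : K ≃+* K) d = d := by
      intro n
      induction n with
      | zero => rfl
      | succ k ih => rw [pow_succ, show ((σ ^ k * σ : K ≃+* K)) d = (σ ^ k : K ≃+* K) (σ d) from rfl, hd, ih]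
    refine ⟨?_, C d, ?_⟩
    · calc (C d).degree ≤ 0 := degree_C_le
        _ < f.degree := by rw [hdegf]; exact_mod_cast (by omega : 0 < m)
    · rw [sMul_C_left]
      ext k
      rw [coeff_sMul_C_right, coeff_C_mul, hdn, mul_comm]
end

section
/- Let K be a field, σ an automorphism of K with fixed field F, and let f(t) = t^m − Σ a_i t^i ∈ K[t;σ] be not right invariant with all a_i ∈ Fix(σ^s) for some s ∈ {1,…,m−1}, and write m = qs for a positive integer q. Then L ⊕ L t^s ⊕ L t^{2s} ⊕ ⋯ ⊕ L t^{(q−1)s} ⊕ L·(Σ a_i t^i) is an F-subspace of Nuc_r(S_f), where L = Nuc(S_f). -/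
open Polynomial

variable {K : Type} [Field K] (σ : K ≃+* K)

lemma sMul_zero_left (r : K[X]) : sMul σ 0 r = 0 := Polynomial.sum_zero_index _

lemma sMul_add_left (p p' r : K[X]) : sMul σ (p + p') r = sMul σ p r + sMul σ p' r :=
  Polynomial.sum_add_index _ _ _ (fun i => by simp) (fun i b₁ b₂ => by simp [C_add, add_mul])

lemma sMul_monomial_left (i : ℕ) (a : K) (r : K[X]) :
    sMul σ (monomial i a) r = C a * (r.map ((σ ^ i : K ≃+* K) : K →+* K)) * X ^ i :=
  Polynomial.sum_monomial_index _ _ (by simp)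

noncomputable def sMulLeftHom (r : K[X]) : K[X] →+ K[X] where
  toFun p := sMul σ p r
  map_zero' := sMul_zero_left σ r
  map_add' p p' := sMul_add_left σ p p' r

noncomputable def sMulRightHom (p : K[X]) : K[X] →+ K[X] where
  toFun r := sMul σ p r
  map_zero' := by simp [sMul, Polynomial.sum]
  map_add' r r' := by
    simp only [sMul, Polynomial.map_add]
    rw [← Polynomial.sum_add]
    congr 1; funext i a; ring

lemma sMul_sub_left (p p' r : K[X]) : sMul σ (p - p') r = sMul σ p r - sMul σ p' r :=
  map_sub (sMulLeftHom σ r) p p'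

lemma sMul_sum_left {ι : Type} (t : Finset ι) (P : ι → K[X]) (r : K[X]) :
    sMul σ (∑ j ∈ t, P j) r = ∑ j ∈ t, sMul σ (P j) r :=
  map_sum (sMulLeftHom σ r) P t

lemma sMul_add_right (p r r' : K[X]) : sMul σ p (r + r') = sMul σ p r + sMul σ p r' :=
  map_add (sMulRightHom σ p) r r'

lemma sMul_sub_right (p r r' : K[X]) : sMul σ p (r - r') = sMul σ p r - sMul σ p r' :=
  map_sub (sMulRightHom σ p) r r'

lemma sMul_sum_right {ι : Type} (t : Finset ι) (p : K[X]) (R : ι → K[X]) :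
    sMul σ p (∑ j ∈ t, R j) = ∑ j ∈ t, sMul σ p (R j) :=
  map_sum (sMulRightHom σ p) R t

lemma sMul_mul_X_pow_right (p r : K[X]) (n : ℕ) :
    sMul σ p (r * X ^ n) = sMul σ p r * X ^ n := by
  simp only [sMul, Polynomial.sum_def, Finset.sum_mul, Polynomial.map_mul,
    Polynomial.map_pow, map_X]
  congr 1; funext i; ring

lemma coe_pow_add (i n : ℕ) : ((σ ^ (i + n) : K ≃+* K) : K →+* K)
    = ((σ ^ i : K ≃+* K) : K →+* K).comp ((σ ^ n : K ≃+* K) : K →+* K) := by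
  ext x
  simp [pow_add]

lemma map_pow_add (r : K[X]) (i n : ℕ) :
    r.map ((σ ^ (i + n) : K ≃+* K) : K →+* K)
      = (r.map ((σ ^ n : K ≃+* K) : K →+* K)).map ((σ ^ i : K ≃+* K) : K →+* K) := by
  rw [Polynomial.map_map, coe_pow_add]

lemma sMul_mul_X_pow_left (p f : K[X]) (n : ℕ)
    (hmap : f.map ((σ ^ n : K ≃+* K) : K →+* K) = f) :
    sMul σ (p * X ^ n) f = sMul σ p f * X ^ n := by
  induction p using Polynomial.induction_on' with
  | add p p' hp hp' =>
    rw [add_mul, sMul_add_left, hp, hp', sMul_add_left, add_mul]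
  | monomial i a =>
    rw [show (monomial i a : K[X]) * X ^ n = monomial (i + n) a by
      rw [← C_mul_X_pow_eq_monomial, ← C_mul_X_pow_eq_monomial, pow_add]; ring]
    rw [sMul_monomial_left, sMul_monomial_left, map_pow_add, hmap, pow_add]
    ring

lemma sMul_C_assoc (p r : K[X]) (c : K) :
    sMul σ p (C c * r) = sMul σ (sMul σ p (C c)) r := by
  induction p using Polynomial.induction_on' with
  | add p p' hp hp' => rw [sMul_add_left, hp, hp', sMul_add_left, sMul_add_left]
  | monomial i a =>
    rw [sMul_monomial_left, sMul_monomial_left]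
    rw [show C a * (C c).map ((σ ^ i : K ≃+* K) : K →+* K) * X ^ i
        = monomial i (a * (σ ^ i : K ≃+* K) c) by
      rw [map_C, ← C_mul_X_pow_eq_monomial, C_mul]; rfl]
    rw [sMul_monomial_left, Polynomial.map_mul, map_C]
    rw [C_mul]
    simp only [RingEquiv.coe_toRingHom]
    ring

lemma sum_pow_degree_lt (m : ℕ) (hm : 0 < m) (a : ℕ → K) :
    (∑ i ∈ Finset.range m, C (a i) * X ^ i).degree < (m : WithBot ℕ) := by
  apply lt_of_le_of_lt (Polynomial.degree_sum_le _ _)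
  rw [Finset.sup_lt_iff (by exact WithBot.bot_lt_coe m)]
  intro i hi
  exact lt_of_le_of_lt (degree_C_mul_X_pow_le _ _)
    (WithBot.coe_lt_coe.mpr (Finset.mem_range.mp hi))

lemma coe_one_eq : ((1 : K ≃+* K) : K →+* K) = RingHom.id K := by ext x; rfl


/-- Proposition 3.3 (i): let `f(t) = t^m - Σ a_i t^i ∈ K[t;σ]` be not right
invariant with all `a_i ∈ Fix(σ^s)`, `s` minimal in `{1,…,m-1}` with this property,
and `m = q·s` with `q > 0`. Then, with `L = Nuc(S_f)`, the subset
`L ⊕ L t^s ⊕ ⋯ ⊕ L t^{(q-1)s} ⊕ L·(Σ a_i t^i)` is an `F`-subspace of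
`Nuc_r(S_f)`; i.e. each of its elements lies in the right nucleus. -/
theorem span_pow_s_subset_rightNucleus {K : Type} [Field K] (σ : K ≃+* K)
    (m : ℕ) (hm : 2 ≤ m) (a : ℕ → K) (f : K[X])
    (hf : f = X ^ m - ∑ i ∈ Finset.range m, C (a i) * X ^ i)
    (hri : ¬ RightInvariant σ f)
    (s : ℕ) (hs : 1 ≤ s) (hs' : s ≤ m - 1)
    (hfix : ∀ i < m, (σ ^ s) (a i) = a i)
    (hmin : ∀ s', 1 ≤ s' → s' < s → ¬ ∀ i < m, (σ ^ s') (a i) = a i)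
    (q : ℕ) (hq : 0 < q) (hqs : m = q * s) :
    ∀ (c : ℕ → K) (c' : K), (∀ j < q, InEigenring σ f (C (c j))) →
      InEigenring σ f (C c') →
      InEigenring σ f
        ((∑ j ∈ Finset.range q, C (c j) * X ^ (j * s)) +
          C c' * ∑ i ∈ Finset.range m, C (a i) * X ^ i) := by
  intro c c' hc hc'
  have hm0 : 0 < m := lt_of_lt_of_le two_pos hm
  set A : K[X] := ∑ i ∈ Finset.range m, C (a i) * X ^ i with hA
  have hAdeg : A.degree < (m : WithBot ℕ) := sum_pow_degree_lt m hm0 a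
  have degf : f.degree = (m : WithBot ℕ) := by
    rw [hf, degree_sub_eq_left_of_degree_lt (by rw [degree_X_pow]; exact hAdeg),
      degree_X_pow]
  -- f is fixed by σ^s coefficientwise
  have hmaps : f.map ((σ ^ s : K ≃+* K) : K →+* K) = f := by
    rw [hf, hA]
    simp only [Polynomial.map_sub, Polynomial.map_pow, map_X, Polynomial.map_sum,
      Polynomial.map_mul, map_C]
    congr 1
    apply Finset.sum_congr rfl
    intro i hi
    rw [show ((σ ^ s : K ≃+* K) : K →+* K) (a i) = (σ ^ s) (a i) from rfl,
      hfix i (Finset.mem_range.mp hi)]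
  have hmapks : ∀ k : ℕ, f.map ((σ ^ (k * s) : K ≃+* K) : K →+* K) = f := by
    intro k
    induction k with
    | zero => simp [coe_one_eq]
    | succ k ih =>
      rw [show (k + 1) * s = k * s + s by ring, map_pow_add, hmaps, ih]
  have hmapm : f.map ((σ ^ m : K ≃+* K) : K →+* K) = f := by rw [hqs]; exact hmapks q
  obtain ⟨-, q0, hq0⟩ := hc'
  have hQ : ∀ j, ∃ qq : K[X], j < q → sMul σ f (C (c j)) = sMul σ qq f := by
    intro j
    by_cases h : j < q
    · obtain ⟨-, qq, hqq⟩ := hc j h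
      exact ⟨qq, fun _ => hqq⟩
    · exact ⟨0, fun h' => absurd h' h⟩
  choose Q hQ' using hQ
  constructor
  · -- degree bound
    rw [degf]
    apply lt_of_le_of_lt (degree_add_le _ _)
    apply max_lt
    · apply lt_of_le_of_lt (Polynomial.degree_sum_le _ _)
      rw [Finset.sup_lt_iff (by exact WithBot.bot_lt_coe m)]
      intro j hj
      refine lt_of_le_of_lt (degree_C_mul_X_pow_le _ _) (WithBot.coe_lt_coe.mpr ?_)
      calc j * s < q * s := (Nat.mul_lt_mul_right hs).mpr (Finset.mem_range.mp hj)
        _ = m := hqs.symm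
    · refine lt_of_le_of_lt (degree_mul_le _ _) ?_
      apply lt_of_le_of_lt (add_le_add degree_C_le le_rfl)
      rwa [zero_add]
  · refine ⟨(∑ j ∈ Finset.range q, Q j * X ^ (j * s)) + (q0 * X ^ m - sMul σ q0 f), ?_⟩
    have key1 : sMul σ f (∑ j ∈ Finset.range q, C (c j) * X ^ (j * s))
        = sMul σ (∑ j ∈ Finset.range q, Q j * X ^ (j * s)) f := by
      rw [sMul_sum_right, sMul_sum_left]
      apply Finset.sum_congr rfl
      intro j hj
      rw [sMul_mul_X_pow_right, hQ' j (Finset.mem_range.mp hj),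
        sMul_mul_X_pow_left σ _ f _ (hmapks j)]
    have key2 : sMul σ f (C c' * A)
        = sMul σ (q0 * X ^ m - sMul σ q0 f) f := by
      have hsplit : C c' * A = C c' * X ^ m - C c' * f := by rw [hf]; ring
      rw [hsplit, sMul_sub_right, sMul_mul_X_pow_right, hq0,
        ← sMul_mul_X_pow_left σ q0 f m hmapm, sMul_C_assoc, hq0, ← sMul_sub_left]
    rw [sMul_add_right, key1, key2, ← sMul_add_left]
end
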